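/- arXiv:2107.12005 — 3 statements merged into one kernel-verified Lean document; each statement's English description precedes it below -/
import Mathlib

section
/- Let n ≥ 1, let K : ℝⁿ × ℝⁿ → ℂ be a smooth function, let q₁ ∈ ℕ, C₀ > 0 and l ∈ ℕ be such that |∂_x^α K(x,y)| ≤ C₀ (1+|x|)^{q₁} (1+|y|)^{q₁} for all multi-indices α with |α| ≤ l and all x, y ∈ ℝⁿ. Let φ : ℝⁿ → ℂ be continuous with μ_{-q₂,0}(φ) := sup_{y ∈ ℝⁿ} (1+|y|)^{-q₂} |φ(y)| < ∞ for some q₂ ∈ ℕ. Then for every ε ∈ (0,1], the function Aφ(x) := ∫_{ℝⁿ} K(x,y) φ(y) e^{-ε|y|²} dy is well defined (the integrand is integrable in y for each x), Aφ is l-times continuously differentiable, and there is a constant C > 0 depending only on C₀, q₁, q₂, n such that for all |α| ≤ l and all x ∈ ℝⁿ, |∂^α (Aφ)(x)| ≤ C (1+|x|)^{q₁} · μ_{-q₂,0}(φ) · ε^{-(q₁+q₂+n)/2}. -/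
open MeasureTheory

/-- Iterated coordinate partial derivative `∂_{i₁} ∂_{i₂} ⋯ ∂_{i_k} f` associated with a
list `L = [i₁, …, i_k]` of coordinate directions; a multi-index derivative `∂^α` with
`|α| = k` is such a composition of `k` coordinate partial derivatives. -/
noncomputable def pderivList {n : ℕ} (L : List (Fin n))
    (f : EuclideanSpace ℝ (Fin n) → ℂ) : EuclideanSpace ℝ (Fin n) → ℂ :=
  L.foldr (fun i g => fun x => fderiv ℝ g x (EuclideanSpace.single i (1 : ℝ))) f

open Real

set_option synthInstance.maxHeartbeats 1000000
set_option maxHeartbeats 1000000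

section aux
variable {n : ℕ}
local notation "E" => EuclideanSpace ℝ (Fin n)


lemma pderivList_nil (f : E → ℂ) : pderivList [] f = f := rfl

lemma pderivList_cons (i : Fin n) (L : List (Fin n)) (f : E → ℂ) :
    pderivList (i :: L) f =
      fun x => fderiv ℝ (pderivList L f) x (EuclideanSpace.single i (1 : ℝ)) := rfl

lemma pderivList_append (M L : List (Fin n)) (f : E → ℂ) :
    pderivList (M ++ L) f = pderivList M (pderivList L f) := by
  simp [pderivList, List.foldr_append]

/-- Parametric smoothness of iterated coordinate partial derivatives. -/
lemma contDiff_pderivList_param {P : Type*} [NormedAddCommGroup P] [NormedSpace ℝ P]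
    (f : P → E → ℂ) (hf : ContDiff ℝ (⊤ : ℕ∞) (fun q : P × E => f q.1 q.2)) (L : List (Fin n)) :
    ContDiff ℝ (⊤ : ℕ∞) (fun q : P × E => pderivList L (f q.1) q.2) := by
  induction L with
  | nil => exact hf
  | cons i L ih =>
      have h1 : ContDiff ℝ (⊤ : ℕ∞) (fun r : (P × E) × E => pderivList L (f r.1.1) r.2) :=
        ih.comp ((contDiff_fst.comp contDiff_fst).prodMk contDiff_snd)
      have h2 : ContDiff ℝ (⊤ : ℕ∞)
          (fun q : P × E => fderiv ℝ (fun x' => pderivList L (f q.1) x') q.2) :=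
        ContDiff.fderiv (f := fun (q : P × E) (x' : E) => pderivList L (f q.1) x')
          (g := fun q : P × E => q.2) h1 contDiff_snd (by simp)
      simpa [pderivList_cons, Function.comp_def] using
        ((ContinuousLinearMap.apply ℝ ℂ (EuclideanSpace.single i (1:ℝ))).contDiff).comp h2

lemma contDiff_pderivList (f : E → ℂ) (hf : ContDiff ℝ (⊤ : ℕ∞) f) (L : List (Fin n)) :
    ContDiff ℝ (⊤ : ℕ∞) (pderivList L f) := by
  have := contDiff_pderivList_param (P := E) (fun _ x' => f x')
    (hf.comp contDiff_snd) L
  simpa [Function.comp_def] using this.comp (contDiff_id.prodMk contDiff_id)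



lemma euclid_coord_le_norm (v : E) (i : Fin n) : |v i| ≤ ‖v‖ := by
  have h := abs_real_inner_le_norm (EuclideanSpace.single i (1:ℝ)) v
  rw [EuclideanSpace.inner_single_left] at h
  simpa [EuclideanSpace.norm_single] using h

lemma iteratedFDeriv_apply_basis (f : E → ℂ) (hf : ContDiff ℝ (⊤ : ℕ∞) f) :
    ∀ (k : ℕ) (p : Fin k → Fin n) (x : E),
      iteratedFDeriv ℝ k f x (fun a => EuclideanSpace.single (p a) (1:ℝ)) =
        pderivList (List.ofFn p) f x := by
  intro k
  induction k with
  | zero =>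
      intro p x
      simp [pderivList, List.ofFn_zero, iteratedFDeriv_zero_apply]
  | succ k ih =>
      intro p x
      have hdiff : DifferentiableAt ℝ (iteratedFDeriv ℝ k f) x := by
        have : ContDiff ℝ (⊤ : ℕ∞) (iteratedFDeriv ℝ k f) := hf.iteratedFDeriv_right (by exact_mod_cast le_top)
        exact (this.differentiable (by simp)) x
      have hA := ((ContinuousMultilinearMap.apply ℝ (fun _ : Fin k => E) ℂ
          (fun a => EuclideanSpace.single (p a.succ) (1:ℝ))).hasFDerivAt.comp x
          hdiff.hasFDerivAt).fderiv
      have hIH : pderivList (List.ofFn (fun a : Fin k => p a.succ)) f =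
          fun x => iteratedFDeriv ℝ k f x
            (fun a => EuclideanSpace.single (p a.succ) (1:ℝ)) := by
        funext x; exact (ih _ x).symm
      rw [List.ofFn_succ, pderivList_cons, hIH]
      have hcomp : (fun x => iteratedFDeriv ℝ k f x
            (fun a => EuclideanSpace.single (p a.succ) (1:ℝ))) =
          (ContinuousMultilinearMap.apply ℝ (fun _ : Fin k => E) ℂ
            (fun a => EuclideanSpace.single (p a.succ) (1:ℝ))) ∘ (iteratedFDeriv ℝ k f) := rfl
      beta_reduce
      rw [hcomp, hA, iteratedFDeriv_succ_apply_left]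
      rfl

lemma norm_iteratedFDeriv_le_sum (f : E → ℂ) (hf : ContDiff ℝ (⊤ : ℕ∞) f) (k : ℕ) (x : E) :
    ‖iteratedFDeriv ℝ k f x‖ ≤
      ∑ p : Fin k → Fin n, ‖pderivList (List.ofFn p) f x‖ := by
  apply ContinuousMultilinearMap.opNorm_le_bound
    (Finset.sum_nonneg fun _ _ => norm_nonneg _)
  intro v
  have hv : (fun a : Fin k => v a) =
      fun a : Fin k => ∑ i : Fin n, (v a i) • EuclideanSpace.single i (1:ℝ) := by
    funext a
    have := (EuclideanSpace.basisFun (Fin n) ℝ).sum_repr (v a)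
    simp only [EuclideanSpace.basisFun_repr, EuclideanSpace.basisFun_apply] at this
    exact this.symm
  calc ‖iteratedFDeriv ℝ k f x v‖
      = ‖iteratedFDeriv ℝ k f x
          (fun a => ∑ i : Fin n, (v a i) • EuclideanSpace.single i (1:ℝ))‖ := by rw [← hv]
    _ = ‖∑ p : Fin k → Fin n, iteratedFDeriv ℝ k f x
          (fun a => (v a (p a)) • EuclideanSpace.single (p a) (1:ℝ))‖ := by
        rw [ContinuousMultilinearMap.map_sum]
    _ ≤ ∑ p : Fin k → Fin n, ‖iteratedFDeriv ℝ k f x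
          (fun a => (v a (p a)) • EuclideanSpace.single (p a) (1:ℝ))‖ := norm_sum_le _ _
    _ ≤ (∑ p : Fin k → Fin n, ‖pderivList (List.ofFn p) f x‖) * ∏ a : Fin k, ‖v a‖ := by
        rw [Finset.sum_mul]
        apply Finset.sum_le_sum
        intro p _
        rw [ContinuousMultilinearMap.map_smul_univ, norm_smul,
          iteratedFDeriv_apply_basis f hf k p x]
        have h1 : ‖∏ a : Fin k, v a (p a)‖ ≤ ∏ a : Fin k, ‖v a‖ := by
          calc ‖∏ a : Fin k, v a (p a)‖ ≤ ∏ a : Fin k, ‖v a (p a)‖ := by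
                simpa using norm_prod_le (Finset.univ) (fun a => v a (p a))
            _ ≤ ∏ a : Fin k, ‖v a‖ := by
                apply Finset.prod_le_prod (fun _ _ => norm_nonneg _)
                intro a _
                simpa [Real.norm_eq_abs] using euclid_coord_le_norm (v a) (p a)
        calc ‖∏ a : Fin k, v a (p a)‖ * ‖pderivList (List.ofFn p) f x‖
            ≤ (∏ a : Fin k, ‖v a‖) * ‖pderivList (List.ofFn p) f x‖ :=
              mul_le_mul_of_nonneg_right h1 (norm_nonneg _)
          _ = ‖pderivList (List.ofFn p) f x‖ * ∏ a : Fin k, ‖v a‖ := mul_comm _ _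



lemma integrable_gauss {b : ℝ} (hb : 0 < b) :
    Integrable (fun y : E => Real.exp (-b * ‖y‖ ^ 2)) := by
  have h := (GaussianFourier.integrable_cexp_neg_mul_sq_norm_add (V := E)
    (b := (b : ℂ)) (by simpa using hb) 0 0).norm
  refine h.congr (Filter.Eventually.of_forall fun y => ?_)
  simp only [Complex.norm_exp]
  congr 1
  have : (-(b:ℂ) * ((‖y‖:ℝ):ℂ)^2 + 0 * (((inner ℝ (0:E) y : ℝ)):ℂ)) = ((-b * ‖y‖^2 : ℝ) : ℂ) := by
    push_cast
    ring
  rw [this, Complex.ofReal_re]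

lemma sqrt_pow_eq_rpow {ε : ℝ} (hε0 : 0 < ε) (k : ℕ) :
    (Real.sqrt ε) ^ k = ε ^ ((k:ℝ)/2) := by
  rw [Real.sqrt_eq_rpow, ← Real.rpow_natCast (ε ^ ((1:ℝ)/2)) k, ← Real.rpow_mul hε0.le]
  congr 1
  ring

lemma poly_gauss_ptwise {ε : ℝ} (hεI : ε ∈ Set.Ioc (0:ℝ) 1) (k : ℕ) (y : E) :
    (1 + ‖y‖) ^ k * Real.exp (-ε * ‖y‖ ^ 2) ≤
      ((k.factorial : ℝ) * Real.exp (3/2) * ε ^ (-(k:ℝ)/2)) *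
        Real.exp (-(ε/2) * ‖y‖ ^ 2) := by
  obtain ⟨hε0, hε1⟩ := hεI
  set t := ‖y‖ with ht
  have ht0 : 0 ≤ t := norm_nonneg _
  set s := Real.sqrt ε * t with hs
  have hs0 : 0 ≤ s := mul_nonneg (Real.sqrt_nonneg _) ht0
  have hsqrt : 0 < Real.sqrt ε := Real.sqrt_pos.mpr hε0
  have hsq : Real.sqrt ε ^ 2 = ε := Real.sq_sqrt hε0.le
  have h1 : 1 + t ≤ (1 + s) / Real.sqrt ε := by
    rw [le_div_iff₀ hsqrt]
    have : Real.sqrt ε ≤ 1 := by nlinarith [hsq, hsqrt]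
    nlinarith [hsqrt]
  have h2 : (1 + t) ^ k ≤ ε ^ (-(k:ℝ)/2) * (1 + s) ^ k := by
    have hpow := pow_le_pow_left₀ (by linarith) h1 k
    calc (1+t)^k ≤ ((1+s)/Real.sqrt ε)^k := hpow
      _ = (1+s)^k / (Real.sqrt ε)^k := div_pow _ _ _
      _ = ε ^ (-(k:ℝ)/2) * (1+s)^k := by
          rw [div_eq_mul_inv, mul_comm, sqrt_pow_eq_rpow hε0,
            ← Real.rpow_neg hε0.le]
          congr 2
          ring
  have h3 : (1 + s) ^ k ≤ (k.factorial : ℝ) * Real.exp (1 + s) := by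
    have hpf := Real.pow_div_factorial_le_exp (x := 1 + s) (by linarith) k
    have hk : (0:ℝ) < k.factorial := by positivity
    rw [div_le_iff₀ hk] at hpf
    linarith [hpf]
  have hst : s ^ 2 = ε * t ^ 2 := by rw [hs, mul_pow, hsq]
  have h4 : Real.exp (1 + s) * Real.exp (-ε * t ^ 2) ≤
      Real.exp (3/2) * Real.exp (-(ε/2) * t ^ 2) := by
    rw [← Real.exp_add, ← Real.exp_add]
    apply Real.exp_le_exp.mpr
    nlinarith [sq_nonneg (s - 1)]
  calc (1 + t) ^ k * Real.exp (-ε * t ^ 2)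
      ≤ (ε ^ (-(k:ℝ)/2) * ((k.factorial : ℝ) * Real.exp (1 + s))) * Real.exp (-ε * t ^ 2) := by
        apply mul_le_mul_of_nonneg_right _ (Real.exp_nonneg _)
        refine h2.trans ?_
        exact mul_le_mul_of_nonneg_left h3 (Real.rpow_nonneg hε0.le _)
    _ = (ε ^ (-(k:ℝ)/2) * (k.factorial : ℝ)) * (Real.exp (1 + s) * Real.exp (-ε * t ^ 2)) := by
        ring
    _ ≤ (ε ^ (-(k:ℝ)/2) * (k.factorial : ℝ)) * (Real.exp (3/2) * Real.exp (-(ε/2) * t ^ 2)) := by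
        apply mul_le_mul_of_nonneg_left h4
        positivity
    _ = ((k.factorial : ℝ) * Real.exp (3/2) * ε ^ (-(k:ℝ)/2)) * Real.exp (-(ε/2) * t ^ 2) := by
        ring

lemma integrable_poly_gauss {ε : ℝ} (hεI : ε ∈ Set.Ioc (0:ℝ) 1) (k : ℕ) :
    Integrable (fun y : E => (1 + ‖y‖) ^ k * Real.exp (-ε * ‖y‖ ^ 2)) := by
  apply Integrable.mono'
    (((integrable_gauss (n := n) (half_pos hεI.1)).const_mul
      ((k.factorial : ℝ) * Real.exp (3/2) * ε ^ (-(k:ℝ)/2))))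
  · exact (Continuous.aestronglyMeasurable (by continuity))
  · refine Filter.Eventually.of_forall fun y => ?_
    have h := poly_gauss_ptwise (n := n) hεI k y
    have h0 : 0 ≤ (1 + ‖y‖) ^ k * Real.exp (-ε * ‖y‖ ^ 2) := by positivity
    rw [Real.norm_eq_abs, abs_of_nonneg h0]
    simpa using h

lemma integral_poly_gauss_le {ε : ℝ} (hεI : ε ∈ Set.Ioc (0:ℝ) 1) (k : ℕ) :
    ∫ y : E, (1 + ‖y‖) ^ k * Real.exp (-ε * ‖y‖ ^ 2) ≤
      ((k.factorial : ℝ) * Real.exp (3/2) * (2 * π) ^ ((n:ℝ)/2)) *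
        ε ^ (-((k:ℝ) + n)/2) := by
  have hε0 : 0 < ε := hεI.1
  have hgauss : ∫ y : E, Real.exp (-(ε/2) * ‖y‖ ^ 2) = (π / (ε/2)) ^ ((n:ℝ)/2) := by
    have h := GaussianFourier.integral_rexp_neg_mul_sq_norm (V := E) (half_pos hε0)
    simpa [finrank_euclideanSpace_fin] using h
  have hmono : ∫ y : E, (1 + ‖y‖) ^ k * Real.exp (-ε * ‖y‖ ^ 2) ≤
      ∫ y : E, ((k.factorial : ℝ) * Real.exp (3/2) * ε ^ (-(k:ℝ)/2)) *
        Real.exp (-(ε/2) * ‖y‖ ^ 2) := by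
    apply integral_mono (integrable_poly_gauss hεI k)
      (((integrable_gauss (n := n) (half_pos hε0)).const_mul _))
    intro y
    exact poly_gauss_ptwise hεI k y
  rw [integral_const_mul, hgauss] at hmono
  refine hmono.trans (le_of_eq ?_)
  have h2π : (0:ℝ) < 2 * π := by positivity
  have hdiv : (π / (ε/2)) = (2 * π) * ε⁻¹ := by field_simp
  have hinv : (ε⁻¹ : ℝ) ^ ((n:ℝ)/2) = ε ^ (-((n:ℝ)/2)) := by
    rw [Real.inv_rpow hε0.le, ← Real.rpow_neg hε0.le]
  have hεadd : ε ^ (-(k:ℝ)/2) * ε ^ (-((n:ℝ)/2)) = ε ^ (-((k:ℝ)+n)/2) := by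
    rw [← Real.rpow_add hε0]
    congr 1
    ring
  rw [hdiv, Real.mul_rpow h2π.le (inv_nonneg.mpr hε0.le), hinv]
  calc (k.factorial : ℝ) * Real.exp (3/2) * ε ^ (-(k:ℝ)/2) *
        ((2*π) ^ ((n:ℝ)/2) * ε ^ (-((n:ℝ)/2)))
      = ((k.factorial : ℝ) * Real.exp (3/2) * (2*π) ^ ((n:ℝ)/2)) *
        (ε ^ (-(k:ℝ)/2) * ε ^ (-((n:ℝ)/2))) := by ring
    _ = ((k.factorial : ℝ) * Real.exp (3/2) * (2*π) ^ ((n:ℝ)/2)) * ε ^ (-((k:ℝ)+n)/2) := by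
        rw [hεadd]


end aux
section master
variable {n : ℕ}
local notation "E" => EuclideanSpace ℝ (Fin n)

lemma smul_norm_bound {F : Type*} [NormedAddCommGroup F]
    {q₁ q₂ : ℕ} {ε Cψ C R : ℝ} {ψv : ℂ} {Gv : F} {x y : E} [NormedSpace ℂ F]
    (hψv : ‖ψv‖ ≤ Cψ * (1 + ‖y‖) ^ q₂ * Real.exp (-ε * ‖y‖ ^ 2))
    (hGv : ‖Gv‖ ≤ C * (1 + ‖x‖) ^ q₁ * (1 + ‖y‖) ^ q₁)
    (hC : 0 ≤ C) (hR : (1 + ‖x‖) ^ q₁ ≤ R) :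
    ‖ψv • Gv‖ ≤ (Cψ * C * R) * ((1 + ‖y‖) ^ (q₁ + q₂) * Real.exp (-ε * ‖y‖ ^ 2)) := by
  have hCψ' : 0 ≤ Cψ * (1 + ‖y‖) ^ q₂ * Real.exp (-ε * ‖y‖ ^ 2) :=
    (norm_nonneg _).trans hψv
  have hR0 : (0:ℝ) ≤ R := le_trans (by positivity) hR
  rw [norm_smul]
  calc ‖ψv‖ * ‖Gv‖
      ≤ (Cψ * (1 + ‖y‖) ^ q₂ * Real.exp (-ε * ‖y‖ ^ 2)) *
        (C * (1 + ‖x‖) ^ q₁ * (1 + ‖y‖) ^ q₁) :=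
        mul_le_mul hψv hGv (norm_nonneg _) hCψ'
    _ ≤ (Cψ * (1 + ‖y‖) ^ q₂ * Real.exp (-ε * ‖y‖ ^ 2)) *
        (C * R * (1 + ‖y‖) ^ q₁) := by
        apply mul_le_mul_of_nonneg_left _ hCψ'
        apply mul_le_mul_of_nonneg_right _ (by positivity)
        exact mul_le_mul_of_nonneg_left hR hC
    _ = (Cψ * C * R) * ((1 + ‖y‖) ^ (q₁ + q₂) * Real.exp (-ε * ‖y‖ ^ 2)) := by
        rw [pow_add]; ring

lemma master_integrable {q₁ q₂ : ℕ} {ε : ℝ} (hεI : ε ∈ Set.Ioc (0:ℝ) 1)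
    {ψ : E → ℂ} (hψc : Continuous ψ) {Cψ : ℝ}
    (hψ : ∀ y, ‖ψ y‖ ≤ Cψ * (1 + ‖y‖) ^ q₂ * Real.exp (-ε * ‖y‖ ^ 2))
    {F : Type*} [NormedAddCommGroup F] [NormedSpace ℝ F] [NormedSpace ℂ F]
    (G : E → E → F) (hGc : Continuous (fun p : E × E => G p.1 p.2))
    {C : ℝ} (hC : 0 ≤ C)
    (hGb : ∀ x y, ‖G x y‖ ≤ C * (1 + ‖x‖) ^ q₁ * (1 + ‖y‖) ^ q₁)
    (x : E) : Integrable (fun y => ψ y • G x y) := by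
  refine Integrable.mono'
    ((integrable_poly_gauss hεI (q₁ + q₂)).const_mul (Cψ * C * (1 + ‖x‖) ^ q₁)) ?_ ?_
  · exact (hψc.smul (hGc.comp (Continuous.prodMk_right x))).aestronglyMeasurable
  · exact Filter.Eventually.of_forall fun y =>
      smul_norm_bound (hψ y) (hGb x y) hC le_rfl

lemma master {q₁ q₂ : ℕ} {ε : ℝ} (hεI : ε ∈ Set.Ioc (0:ℝ) 1)
    {ψ : E → ℂ} (hψc : Continuous ψ) {Cψ : ℝ}
    (hψ : ∀ y, ‖ψ y‖ ≤ Cψ * (1 + ‖y‖) ^ q₂ * Real.exp (-ε * ‖y‖ ^ 2)) :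
    ∀ (m : ℕ) {F : Type} [NormedAddCommGroup F] [NormedSpace ℝ F] [NormedSpace ℂ F]
      [SMulCommClass ℝ ℂ F] [CompleteSpace F]
      (G : E → E → F), ContDiff ℝ (⊤ : ℕ∞) (fun p : E × E => G p.1 p.2) →
      (∀ j : ℕ, j ≤ m → ∃ C : ℝ, 0 ≤ C ∧ ∀ x y,
        ‖iteratedFDeriv ℝ j (fun x' => G x' y) x‖ ≤
          C * (1 + ‖x‖) ^ q₁ * (1 + ‖y‖) ^ q₁) →
      ContDiff ℝ (m : WithTop ℕ∞) (fun x => ∫ y, ψ y • G x y) ∧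
      (1 ≤ m → ∀ x₀ : E, HasFDerivAt (fun x => ∫ y, ψ y • G x y)
        (∫ y, ψ y • (fderiv ℝ (fun x' => G x' y) x₀)) x₀) := by
  intro m
  induction m with
  | zero =>
      intro F _ _ _ _ _ G hG hGb
      obtain ⟨C, hC0, hC⟩ := hGb 0 le_rfl
      have hCb : ∀ x y, ‖G x y‖ ≤ C * (1 + ‖x‖) ^ q₁ * (1 + ‖y‖) ^ q₁ := by
        intro x y
        have := hC x y
        rwa [norm_iteratedFDeriv_zero] at this
      constructor
      · rw [show ((0:ℕ) : WithTop ℕ∞) = 0 from rfl, contDiff_zero]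
        rw [continuous_iff_continuousAt]
        intro x₀
        apply continuousAt_of_dominated (bound := fun y =>
          (Cψ * C * (2 + ‖x₀‖) ^ q₁) * ((1 + ‖y‖) ^ (q₁ + q₂) * Real.exp (-ε * ‖y‖ ^ 2)))
        · exact Filter.Eventually.of_forall fun x =>
            (hψc.smul (hG.continuous.comp (Continuous.prodMk_right x))).aestronglyMeasurable
        · have hball : Metric.ball x₀ 1 ∈ nhds x₀ := Metric.ball_mem_nhds x₀ one_pos
          refine Filter.eventually_of_mem hball fun x hx => ?_
          refine Filter.Eventually.of_forall fun y => ?_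
          have hxx : (1 + ‖x‖) ^ q₁ ≤ (2 + ‖x₀‖) ^ q₁ := by
            apply pow_le_pow_left₀ (by positivity)
            have h1 := mem_ball_iff_norm.mp hx
            have h2 := norm_sub_norm_le x x₀
            linarith
          exact smul_norm_bound (hψ y) (hCb x y) hC0 hxx
        · exact (integrable_poly_gauss hεI (q₁ + q₂)).const_mul _
        · refine Filter.Eventually.of_forall fun y => ?_
          exact (Continuous.smul continuous_const
            (hG.continuous.comp (continuous_id.prodMk continuous_const))).continuousAt
      · intro h; exact absurd h (by norm_num)
  | succ m ih =>
      intro F _ _ _ _ _ G hG hGb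
      -- the differentiated kernel
      set G' : E → E → (E →L[ℝ] F) := fun x y => fderiv ℝ (fun x' => G x' y) x with hG'def
      have hG' : ContDiff ℝ (⊤ : ℕ∞) (fun p : E × E => G' p.1 p.2) := by
        have h1 : ContDiff ℝ (⊤ : ℕ∞)
            (Function.uncurry (fun (q : E × E) (x' : E) => G x' q.2)) :=
          hG.comp (contDiff_snd.prodMk (contDiff_snd.comp contDiff_fst))
        exact ContDiff.fderiv (f := fun (q : E × E) (x' : E) => G x' q.2)
          (g := Prod.fst) h1 contDiff_fst (by simp)
      have hG'b : ∀ j : ℕ, j ≤ m → ∃ C : ℝ, 0 ≤ C ∧ ∀ x y,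
          ‖iteratedFDeriv ℝ j (fun x' => G' x' y) x‖ ≤
            C * (1 + ‖x‖) ^ q₁ * (1 + ‖y‖) ^ q₁ := by
        intro j hj
        obtain ⟨C, hC0, hC⟩ := hGb (j+1) (by omega)
        refine ⟨C, hC0, fun x y => ?_⟩
        have heq : (fun x' => G' x' y) = fderiv ℝ (fun x' => G x' y) := rfl
        rw [heq, norm_iteratedFDeriv_fderiv]
        exact hC x y
      have hdGy : ∀ y : E, Differentiable ℝ (fun x' => G x' y) := fun y =>
        (hG.comp (contDiff_id.prodMk contDiff_const)).differentiable (by simp)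
      obtain ⟨C0, hC00, hC0b⟩ := hGb 0 (by omega)
      have hCb : ∀ x y, ‖G x y‖ ≤ C0 * (1 + ‖x‖) ^ q₁ * (1 + ‖y‖) ^ q₁ := by
        intro x y
        have := hC0b x y
        rwa [norm_iteratedFDeriv_zero] at this
      obtain ⟨C1, hC10, hC1b⟩ := hGb 1 (by omega)
      have hC1b' : ∀ x y, ‖G' x y‖ ≤ C1 * (1 + ‖x‖) ^ q₁ * (1 + ‖y‖) ^ q₁ := by
        intro x y
        have h0 : ‖G' x y‖ = ‖iteratedFDeriv ℝ 0 (fderiv ℝ (fun x' => G x' y)) x‖ := by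
          rw [norm_iteratedFDeriv_zero]
        rw [h0, norm_iteratedFDeriv_fderiv]
        exact hC1b x y
      have hasfd : ∀ x₀ : E, HasFDerivAt (fun x => ∫ y, ψ y • G x y)
          (∫ y, ψ y • G' x₀ y) x₀ := by
        intro x₀
        apply hasFDerivAt_integral_of_dominated_of_fderiv_le (𝕜 := ℝ)
          (F := fun x y => ψ y • G x y) (F' := fun x y => ψ y • G' x y)
          (bound := fun y => (Cψ * C1 * (2 + ‖x₀‖) ^ q₁) *
            ((1 + ‖y‖) ^ (q₁ + q₂) * Real.exp (-ε * ‖y‖ ^ 2)))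
          (s := Metric.ball x₀ 1) (hs := Metric.ball_mem_nhds x₀ one_pos)
        · exact Filter.Eventually.of_forall fun x =>
            (hψc.smul (hG.continuous.comp (Continuous.prodMk_right x))).aestronglyMeasurable
        · exact master_integrable hεI hψc hψ G hG.continuous hC00 hCb x₀
        · exact (hψc.smul (hG'.continuous.comp
            (Continuous.prodMk_right x₀))).aestronglyMeasurable
        · refine Filter.Eventually.of_forall fun y => fun x hx => ?_
          have hxx : (1 + ‖x‖) ^ q₁ ≤ (2 + ‖x₀‖) ^ q₁ := by
            apply pow_le_pow_left₀ (by positivity)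
            have h1 := mem_ball_iff_norm.mp hx
            have h2 := norm_sub_norm_le x x₀
            linarith
          exact smul_norm_bound (hψ y) (hC1b' x y) hC10 hxx
        · exact (integrable_poly_gauss hεI (q₁ + q₂)).const_mul _
        · refine Filter.Eventually.of_forall fun y => fun x hx => ?_
          exact ((hdGy y x).hasFDerivAt).const_smul (ψ y)
      obtain ⟨cd', _⟩ := ih G' hG' hG'b
      have hAeq : fderiv ℝ (fun x => ∫ y, ψ y • G x y) =
          fun x => ∫ y, ψ y • G' x y := funext fun x => (hasfd x).fderiv
      constructor
      · have hcast : ((m+1 : ℕ) : WithTop ℕ∞) = (m : WithTop ℕ∞) + 1 := by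
          push_cast; rfl
        rw [hcast]
        refine contDiff_succ_iff_fderiv.mpr ⟨fun x => (hasfd x).differentiableAt, ?_, ?_⟩
        · intro h
          exact absurd h (by simp)
        · rw [hAeq]; exact cd'
      · intro _ x₀
        exact hasfd x₀

end master
section final
variable {n : ℕ}
local notation "E" => EuclideanSpace ℝ (Fin n)

lemma fderiv_kernel_smooth {F : Type*} [NormedAddCommGroup F] [NormedSpace ℝ F]
    (G : E → E → F) (hG : ContDiff ℝ (⊤ : ℕ∞) (fun p : E × E => G p.1 p.2)) :
    ContDiff ℝ (⊤ : ℕ∞) (fun p : E × E => fderiv ℝ (fun x' => G x' p.2) p.1) := by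
  have h1 : ContDiff ℝ (⊤ : ℕ∞)
      (Function.uncurry (fun (q : E × E) (x' : E) => G x' q.2)) :=
    hG.comp (contDiff_snd.prodMk (contDiff_snd.comp contDiff_fst))
  exact ContDiff.fderiv (f := fun (q : E × E) (x' : E) => G x' q.2)
    (g := Prod.fst) h1 contDiff_fst (by simp)

/-- Let `K : ℝⁿ × ℝⁿ → ℂ` be smooth with
`|∂_x^α K(x,y)| ≤ C₀ (1+|x|)^{q₁} (1+|y|)^{q₁}` for all `|α| ≤ l`, and let `φ` be continuous
with `(1+|y|)^{-q₂}|φ(y)| ≤ μ`.  Then for every `ε ∈ (0,1]` the function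
`Aφ(x) = ∫ K(x,y) φ(y) e^{-ε|y|²} dy` is well defined, is `l`-times continuously
differentiable, and there is `C > 0` (independent of `ε`) with
`|∂^α (Aφ)(x)| ≤ C (1+|x|)^{q₁} μ ε^{-(q₁+q₂+n)/2}` for all `|α| ≤ l`. -/
theorem integral_operator_moderate_estimate
    (n : ℕ) (hn : 1 ≤ n)
    (K : EuclideanSpace ℝ (Fin n) → EuclideanSpace ℝ (Fin n) → ℂ)
    (hKsmooth : ContDiff ℝ (⊤ : ℕ∞)
      (fun p : EuclideanSpace ℝ (Fin n) × EuclideanSpace ℝ (Fin n) => K p.1 p.2))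
    (q₁ : ℕ) (C₀ : ℝ) (hC₀ : 0 < C₀) (l : ℕ)
    (hKbound : ∀ L : List (Fin n), L.length ≤ l →
      ∀ x y : EuclideanSpace ℝ (Fin n),
        ‖pderivList L (fun x' => K x' y) x‖ ≤ C₀ * (1 + ‖x‖) ^ q₁ * (1 + ‖y‖) ^ q₁)
    (φ : EuclideanSpace ℝ (Fin n) → ℂ) (hφ : Continuous φ)
    (q₂ : ℕ) (μ : ℝ)
    (hφbound : ∀ y : EuclideanSpace ℝ (Fin n), ‖φ y‖ ≤ μ * (1 + ‖y‖) ^ q₂) :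
    (∀ ε ∈ Set.Ioc (0 : ℝ) 1, ∀ x : EuclideanSpace ℝ (Fin n),
      Integrable (fun y => K x y * φ y * (Real.exp (-ε * ‖y‖ ^ 2) : ℂ))) ∧
    (∀ ε ∈ Set.Ioc (0 : ℝ) 1,
      ContDiff ℝ (l : ℕ∞)
        (fun x => ∫ y, K x y * φ y * (Real.exp (-ε * ‖y‖ ^ 2) : ℂ))) ∧
    (∃ C > 0, ∀ ε ∈ Set.Ioc (0 : ℝ) 1, ∀ L : List (Fin n), L.length ≤ l →
      ∀ x : EuclideanSpace ℝ (Fin n),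
        ‖pderivList L (fun x' => ∫ y, K x' y * φ y * (Real.exp (-ε * ‖y‖ ^ 2) : ℂ)) x‖
          ≤ C * (1 + ‖x‖) ^ q₁ * μ * ε ^ (-(((q₁ : ℝ) + q₂ + n) / 2))) := by
  -- basic facts
  have hμ0 : 0 ≤ μ := le_trans (norm_nonneg (φ 0)) (by simpa using hφbound 0)
  -- the regularised density
  set ψ : ℝ → (EuclideanSpace ℝ (Fin n)) → ℂ :=
    fun ε y => φ y * (Real.exp (-ε * ‖y‖ ^ 2) : ℂ) with hψdef
  have hψc : ∀ ε : ℝ, Continuous (ψ ε) := by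
    intro ε
    apply hφ.mul
    exact Complex.continuous_ofReal.comp
      (Real.continuous_exp.comp (continuous_const.mul (continuous_norm.pow 2)))
  have hψb : ∀ (ε : ℝ) (y : EuclideanSpace ℝ (Fin n)),
      ‖ψ ε y‖ ≤ μ * (1 + ‖y‖) ^ q₂ * Real.exp (-ε * ‖y‖ ^ 2) := by
    intro ε y
    rw [hψdef]
    simp only [norm_mul, Complex.norm_real, Real.norm_eq_abs, Real.abs_exp]
    exact mul_le_mul_of_nonneg_right (hφbound y) (Real.exp_nonneg _)
  -- rewriting the integrand
  have hrw : ∀ (ε : ℝ) (x : EuclideanSpace ℝ (Fin n)),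
      (fun y => K x y * φ y * (Real.exp (-ε * ‖y‖ ^ 2) : ℂ)) =
        fun y => ψ ε y • K x y := by
    intro ε x
    funext y
    rw [hψdef]
    simp only [smul_eq_mul]
    ring
  -- kernels given by iterated partial derivatives
  have hKb0 : ∀ x y : EuclideanSpace ℝ (Fin n),
      ‖K x y‖ ≤ C₀ * (1 + ‖x‖) ^ q₁ * (1 + ‖y‖) ^ q₁ := by
    intro x y
    simpa [pderivList] using hKbound [] (Nat.zero_le l) x y
  have hKy : ∀ y : EuclideanSpace ℝ (Fin n), ContDiff ℝ (⊤ : ℕ∞) (fun x' => K x' y) :=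
    fun y => hKsmooth.comp (contDiff_id.prodMk contDiff_const)
  have hD : ∀ L : List (Fin n), ContDiff ℝ (⊤ : ℕ∞)
      (fun p : EuclideanSpace ℝ (Fin n) × EuclideanSpace ℝ (Fin n) =>
        pderivList L (fun x' => K x' p.2) p.1) := by
    intro L
    have hswap : ContDiff ℝ (⊤ : ℕ∞)
        (fun q : EuclideanSpace ℝ (Fin n) × EuclideanSpace ℝ (Fin n) => K q.2 q.1) :=
      hKsmooth.comp (contDiff_snd.prodMk contDiff_fst)
    have h := contDiff_pderivList_param (P := EuclideanSpace ℝ (Fin n))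
      (fun y x' => K x' y) hswap L
    exact h.comp (contDiff_snd.prodMk contDiff_fst)
  -- iterated fderiv bounds for the kernels
  have hDbound : ∀ (L : List (Fin n)) (j : ℕ), j + L.length ≤ l →
      ∀ x y : EuclideanSpace ℝ (Fin n),
      ‖iteratedFDeriv ℝ j (fun x' => pderivList L (fun x'' => K x'' y) x') x‖ ≤
        ((n ^ j : ℕ) * C₀) * (1 + ‖x‖) ^ q₁ * (1 + ‖y‖) ^ q₁ := by
    intro L j hj x y
    have hsm : ContDiff ℝ (⊤ : ℕ∞) (pderivList L (fun x'' => K x'' y)) :=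
      contDiff_pderivList _ (hKy y) L
    have h1 := norm_iteratedFDeriv_le_sum (pderivList L (fun x'' => K x'' y)) hsm j x
    refine h1.trans ?_
    have h2 : ∀ p : Fin j → Fin n,
        ‖pderivList (List.ofFn p) (pderivList L (fun x'' => K x'' y)) x‖ ≤
          C₀ * (1 + ‖x‖) ^ q₁ * (1 + ‖y‖) ^ q₁ := by
      intro p
      rw [← pderivList_append]
      apply hKbound
      simp only [List.length_append, List.length_ofFn]
      omega
    calc ∑ p : Fin j → Fin n,
          ‖pderivList (List.ofFn p) (pderivList L (fun x'' => K x'' y)) x‖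
        ≤ ∑ _p : Fin j → Fin n, C₀ * (1 + ‖x‖) ^ q₁ * (1 + ‖y‖) ^ q₁ :=
          Finset.sum_le_sum fun p _ => h2 p
      _ = ((n ^ j : ℕ) * C₀) * (1 + ‖x‖) ^ q₁ * (1 + ‖y‖) ^ q₁ := by
          rw [Finset.sum_const, Finset.card_univ]
          simp [Fintype.card_fun, mul_assoc]
  refine ⟨?_, ?_, ?_⟩
  · -- integrability
    intro ε hε x
    rw [hrw ε x]
    exact master_integrable hε (hψc ε) (hψb ε) K hKsmooth.continuous hC₀.le hKb0 x
  · -- smoothness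
    intro ε hε
    have hfun : (fun x => ∫ y, K x y * φ y * (Real.exp (-ε * ‖y‖ ^ 2) : ℂ)) =
        fun x => ∫ y, ψ ε y • K x y := funext fun x => by rw [hrw ε x]
    rw [hfun]
    have h := (master (q₁ := q₁) hε (hψc ε) (hψb ε) l K hKsmooth ?_).1
    · exact_mod_cast h
    · intro j hj
      refine ⟨(n ^ j : ℕ) * C₀, by positivity, fun x y => ?_⟩
      simpa [pderivList] using hDbound [] j (by simp only [List.length_nil]; omega) x y
  · -- the estimate
    refine ⟨C₀ * (((q₁ + q₂).factorial : ℝ) * Real.exp (3/2) * (2 * π) ^ ((n:ℝ)/2)),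
      by positivity, ?_⟩
    intro ε hε L hL x
    have hfun : (fun x' => ∫ y, K x' y * φ y * (Real.exp (-ε * ‖y‖ ^ 2) : ℂ)) =
        fun x' => ∫ y, ψ ε y • K x' y := funext fun x' => by rw [hrw ε x']
    rw [hfun]
    -- representation of the iterated derivative
    have hrep : ∀ L : List (Fin n), L.length ≤ l →
        pderivList L (fun x' => ∫ y, ψ ε y • K x' y) =
          fun x => ∫ y, ψ ε y • (pderivList L (fun x' => K x' y) x) := by
      intro L
      induction L with
      | nil => intro _; rfl
      | cons i L ihL =>
          intro hlen
          have hlen' : L.length ≤ l := by simp at hlen; omega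
          rw [pderivList_cons, ihL hlen']
          funext x
          have hGb1 : ∀ j : ℕ, j ≤ 1 → ∃ C : ℝ, 0 ≤ C ∧ ∀ x y,
              ‖iteratedFDeriv ℝ j
                (fun x' => pderivList L (fun x'' => K x'' y) x') x‖ ≤
                C * (1 + ‖x‖) ^ q₁ * (1 + ‖y‖) ^ q₁ := by
            intro j hj
            refine ⟨(n ^ j : ℕ) * C₀, by positivity, fun x y => ?_⟩
            apply hDbound L j
            have := List.length_cons (a := i) (as := L) ▸ hlen
            omega
          have hmfd := (master (q₁ := q₁) hε (hψc ε) (hψb ε) 1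
            (fun x y => pderivList L (fun x'' => K x'' y) x) (hD L) hGb1).2
            le_rfl x
          rw [hmfd.fderiv]
          -- now apply the continuous linear map at the basis vector
          have hint : Integrable (fun y => ψ ε y •
              (fderiv ℝ (fun x' => pderivList L (fun x'' => K x'' y) x') x)) := by
            apply master_integrable hε (hψc ε) (hψb ε)
              (fun x y => fderiv ℝ (fun x' => pderivList L (fun x'' => K x'' y) x') x)
              (fderiv_kernel_smooth
                (fun x y => pderivList L (fun x'' => K x'' y) x) (hD L)).continuous
              (C := (n ^ 1 : ℕ) * C₀) (by positivity)
            intro x y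
            have h0 : ‖fderiv ℝ (fun x' => pderivList L (fun x'' => K x'' y) x') x‖ =
                ‖iteratedFDeriv ℝ 1 (fun x' => pderivList L (fun x'' => K x'' y) x') x‖ := by
              rw [← norm_iteratedFDeriv_fderiv, norm_iteratedFDeriv_zero]
            rw [h0]
            exact hDbound L 1 (by simp only [List.length_cons] at hlen; omega) x y
          rw [ContinuousLinearMap.integral_apply hint]
          rfl
    rw [hrep L hL]
    -- norm estimate
    have hDLb : ∀ y, ‖pderivList L (fun x' => K x' y) x‖ ≤
        C₀ * (1 + ‖x‖) ^ q₁ * (1 + ‖y‖) ^ q₁ := fun y => hKbound L hL x y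
    have hintD : Integrable (fun y => ψ ε y • (pderivList L (fun x' => K x' y) x)) :=
      master_integrable hε (hψc ε) (hψb ε)
        (fun x y => pderivList L (fun x' => K x' y) x) (hD L).continuous hC₀.le
        (fun x y => hKbound L hL x y) x
    calc ‖∫ y, ψ ε y • (pderivList L (fun x' => K x' y) x)‖
        ≤ ∫ y, ‖ψ ε y • (pderivList L (fun x' => K x' y) x)‖ :=
          norm_integral_le_integral_norm _
      _ ≤ ∫ y, (μ * C₀ * (1 + ‖x‖) ^ q₁) *
            ((1 + ‖y‖) ^ (q₁ + q₂) * Real.exp (-ε * ‖y‖ ^ 2)) := by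
          apply integral_mono hintD.norm
            ((integrable_poly_gauss hε (q₁ + q₂)).const_mul _)
          intro y
          exact smul_norm_bound (hψb ε y) (hDLb y) hC₀.le le_rfl
      _ = (μ * C₀ * (1 + ‖x‖) ^ q₁) *
            ∫ y : EuclideanSpace ℝ (Fin n),
              (1 + ‖y‖) ^ (q₁ + q₂) * Real.exp (-ε * ‖y‖ ^ 2) :=
          integral_const_mul _ _
      _ ≤ (μ * C₀ * (1 + ‖x‖) ^ q₁) *
            ((((q₁ + q₂).factorial : ℝ) * Real.exp (3/2) * (2 * π) ^ ((n:ℝ)/2)) *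
              ε ^ (-(((q₁ + q₂ : ℕ):ℝ) + n)/2)) := by
          apply mul_le_mul_of_nonneg_left (integral_poly_gauss_le hε (q₁ + q₂))
          positivity
      _ = C₀ * (((q₁ + q₂).factorial : ℝ) * Real.exp (3/2) * (2 * π) ^ ((n:ℝ)/2)) *
            (1 + ‖x‖) ^ q₁ * μ * ε ^ (-(((q₁:ℝ) + q₂ + n) / 2)) := by
          have hexp : (-((((q₁ + q₂ : ℕ)):ℝ) + n)/2) = -(((q₁:ℝ) + q₂ + n) / 2) := by
            push_cast; ring
          rw [hexp]; ring

end final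
end

section
/- Let n ≥ 1 and let (φ_ε)_{ε ∈ (0,1]} be a family of continuous functions on ℝⁿ and q₂ ∈ ℕ be such that the net is negligible in the sense that for every p ∈ ℕ, sup_{y ∈ ℝⁿ} (1+|y|)^{-q₂}|φ_ε(y)| = O(ε^p) as ε → 0. Let K : ℝⁿ × ℝⁿ → ℂ be continuous with |K(x,y)| ≤ C₀ (1+|x|)^{q₁}(1+|y|)^{q₁} for some C₀ > 0, q₁ ∈ ℕ and all x, y. Then the output net A_ε φ_ε (x) := ∫_{ℝⁿ} K(x,y) φ_ε(y) e^{-ε|y|²} dy is also negligible: for every p ∈ ℕ, sup_{x ∈ ℝⁿ} (1+|x|)^{-q₁} |A_ε φ_ε(x)| = O(ε^p) as ε → 0. -/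
open MeasureTheory

lemma aux_poly_exp (m : ℕ) {ε t : ℝ} (hε : 0 < ε) (hε1 : ε ≤ 1) (ht : 0 ≤ t) :
    (1 + t) ^ m * Real.exp (-ε * t ^ 2) ≤
      (4 * ((m : ℝ) + 1)) ^ (m + 1) * ε⁻¹ ^ (m + 1) * Real.exp (-(ε / 2) * t ^ 2) := by
  have hεinv : (1 : ℝ) ≤ ε⁻¹ := (one_le_inv_iff₀).2 ⟨hε, hε1⟩
  have hm0 : (0 : ℝ) ≤ (m : ℝ) := Nat.cast_nonneg m
  have hM : (1 : ℝ) ≤ (m : ℝ) + 1 := by linarith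
  set s : ℝ := ε * t ^ 2 / (2 * ((m : ℝ) + 1)) with hsdef
  have hs : 0 ≤ s := by positivity
  have hMs : ((m : ℝ) + 1) * s = ε / 2 * t ^ 2 := by
    rw [hsdef]; field_simp
  have he : 4 * ((m : ℝ) + 1) * ε⁻¹ * (1 + s) = 4 * ((m : ℝ) + 1) * ε⁻¹ + 2 * ε⁻¹ * (ε * t ^ 2) := by
    rw [hsdef]; field_simp; ring
  clear_value s
  have key : (1 + t) ^ m ≤ (4 * ((m : ℝ) + 1)) ^ (m + 1) * ε⁻¹ ^ (m + 1) * Real.exp (ε / 2 * t ^ 2) := by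
    have h0 : (1 : ℝ) ≤ 1 + t := by linarith
    have h1 : (1 + t) ^ m ≤ ((1 + t) ^ 2) ^ (m + 1) := by
      rw [← pow_mul]; exact pow_le_pow_right₀ h0 (by omega)
    have h2 : (1 + t) ^ 2 ≤ 2 * (1 + t ^ 2) := by nlinarith [sq_nonneg (t - 1)]
    have h3 : 2 * (1 + t ^ 2) ≤ 4 * ((m : ℝ) + 1) * ε⁻¹ * (1 + s) := by
      rw [he]
      have h2' : (2 : ℝ) ≤ 4 * ((m : ℝ) + 1) * ε⁻¹ := by nlinarith
      have h2'' : 2 * t ^ 2 ≤ 2 * ε⁻¹ * (ε * t ^ 2) := by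
        have : ε⁻¹ * ε = 1 := inv_mul_cancel₀ hε.ne'
        nlinarith [sq_nonneg t]
      linarith
    have h4 : (1 + s) ^ (m + 1) ≤ Real.exp (ε / 2 * t ^ 2) := by
      calc (1 + s) ^ (m + 1) ≤ (Real.exp s) ^ (m + 1) := by
            apply pow_le_pow_left₀ (by positivity)
            linarith [Real.add_one_le_exp s]
        _ = Real.exp (((m : ℝ) + 1) * s) := by
            rw [← Real.exp_nat_mul]; push_cast; ring_nf
        _ = Real.exp (ε / 2 * t ^ 2) := by rw [hMs]
    calc (1 + t) ^ m ≤ ((1 + t) ^ 2) ^ (m + 1) := h1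
      _ ≤ (2 * (1 + t ^ 2)) ^ (m + 1) := pow_le_pow_left₀ (by positivity) h2 _
      _ ≤ (4 * ((m : ℝ) + 1) * ε⁻¹ * (1 + s)) ^ (m + 1) := pow_le_pow_left₀ (by positivity) h3 _
      _ = (4 * ((m : ℝ) + 1)) ^ (m + 1) * ε⁻¹ ^ (m + 1) * (1 + s) ^ (m + 1) := by
            rw [mul_pow, mul_pow]
      _ ≤ (4 * ((m : ℝ) + 1)) ^ (m + 1) * ε⁻¹ ^ (m + 1) * Real.exp (ε / 2 * t ^ 2) := by
            apply mul_le_mul_of_nonneg_left h4 (by positivity)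
  calc (1 + t) ^ m * Real.exp (-ε * t ^ 2)
      ≤ ((4 * ((m : ℝ) + 1)) ^ (m + 1) * ε⁻¹ ^ (m + 1) * Real.exp (ε / 2 * t ^ 2)) *
          Real.exp (-ε * t ^ 2) := mul_le_mul_of_nonneg_right key (Real.exp_pos _).le
    _ = (4 * ((m : ℝ) + 1)) ^ (m + 1) * ε⁻¹ ^ (m + 1) * Real.exp (-(ε / 2) * t ^ 2) := by
        rw [mul_assoc, ← Real.exp_add]; ring_nf

lemma gaussian_integrable (n : ℕ) {ε : ℝ} (hε : 0 < ε) :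
    Integrable (fun y : EuclideanSpace ℝ (Fin n) => Real.exp (-(ε / 2) * ‖y‖ ^ 2)) := by
  have h := (GaussianFourier.integrable_cexp_neg_mul_sq_norm_add
    (V := EuclideanSpace ℝ (Fin n)) (b := ((ε / 2 : ℝ) : ℂ)) (by simpa using half_pos hε)
    0 0).norm
  apply h.congr
  filter_upwards with v
  simp [Complex.norm_exp, ← Complex.ofReal_pow]

lemma gaussian_int_bound (n : ℕ) {ε : ℝ} (hε : 0 < ε) (hε1 : ε ≤ 1) :
    ∫ y : EuclideanSpace ℝ (Fin n), Real.exp (-(ε / 2) * ‖y‖ ^ 2)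
      ≤ (2 * Real.pi) ^ n * ε⁻¹ ^ n := by
  have hεinv : (1 : ℝ) ≤ ε⁻¹ := (one_le_inv_iff₀).2 ⟨hε, hε1⟩
  have hval := GaussianFourier.integral_rexp_neg_mul_sq_norm
    (V := EuclideanSpace ℝ (Fin n)) (b := ε / 2) (half_pos hε)
  rw [hval]
  have hbase : Real.pi / (ε / 2) = 2 * Real.pi * ε⁻¹ := by field_simp
  rw [hbase, finrank_euclideanSpace_fin]
  have h1 : (1 : ℝ) ≤ 2 * Real.pi * ε⁻¹ := by nlinarith [Real.pi_gt_three]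
  calc (2 * Real.pi * ε⁻¹) ^ ((n : ℝ) / 2)
      ≤ (2 * Real.pi * ε⁻¹) ^ ((n : ℝ)) := by
        apply Real.rpow_le_rpow_of_exponent_le h1
        have : (0:ℝ) ≤ n := Nat.cast_nonneg n
        linarith
    _ = (2 * Real.pi * ε⁻¹) ^ n := Real.rpow_natCast _ n
    _ = (2 * Real.pi) ^ n * ε⁻¹ ^ n := mul_pow _ _ n


/-- If the net `(φ_ε)` is negligible at weight `q₂` (i.e. for every `p`,
`sup_y (1+|y|)^{-q₂}|φ_ε(y)| = O(ε^p)` as `ε → 0`), and `K` is continuous with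
`|K(x,y)| ≤ C₀(1+|x|)^{q₁}(1+|y|)^{q₁}`, then the output net
`A_ε φ_ε(x) = ∫ K(x,y) φ_ε(y) e^{-ε|y|²} dy` is negligible at weight `q₁`:
for every `p`, `sup_x (1+|x|)^{-q₁}|A_ε φ_ε(x)| = O(ε^p)` as `ε → 0`. -/
theorem integral_operator_maps_negligible_to_negligible
    (n : ℕ) (hn : 1 ≤ n)
    (φ : ℝ → EuclideanSpace ℝ (Fin n) → ℂ)
    (hφcont : ∀ ε ∈ Set.Ioc (0 : ℝ) 1, Continuous (φ ε))
    (q₂ : ℕ)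
    (hφneg : ∀ p : ℕ, ∃ C > 0, ∃ ε₀ ∈ Set.Ioc (0 : ℝ) 1, ∀ ε ∈ Set.Ioc (0 : ℝ) ε₀,
      ∀ y : EuclideanSpace ℝ (Fin n), ‖φ ε y‖ ≤ C * ε ^ p * (1 + ‖y‖) ^ q₂)
    (K : EuclideanSpace ℝ (Fin n) → EuclideanSpace ℝ (Fin n) → ℂ)
    (hKcont : Continuous
      (fun p : EuclideanSpace ℝ (Fin n) × EuclideanSpace ℝ (Fin n) => K p.1 p.2))
    (q₁ : ℕ) (C₀ : ℝ) (hC₀ : 0 < C₀)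
    (hKbound : ∀ x y : EuclideanSpace ℝ (Fin n),
      ‖K x y‖ ≤ C₀ * (1 + ‖x‖) ^ q₁ * (1 + ‖y‖) ^ q₁) :
    ∀ p : ℕ, ∃ C > 0, ∃ ε₀ ∈ Set.Ioc (0 : ℝ) 1, ∀ ε ∈ Set.Ioc (0 : ℝ) ε₀,
      ∀ x : EuclideanSpace ℝ (Fin n),
        ‖∫ y, K x y * φ ε y * (Real.exp (-ε * ‖y‖ ^ 2) : ℂ)‖
          ≤ C * ε ^ p * (1 + ‖x‖) ^ q₁ := by
  intro p
  set m : ℕ := q₁ + q₂ with hm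
  set B : ℝ := (4 * ((m : ℝ) + 1)) ^ (m + 1) with hB
  obtain ⟨C, hC, ε₀, hε₀, hφb⟩ := hφneg (p + (m + 1 + n))
  refine ⟨C₀ * C * B * (2 * Real.pi) ^ n, by positivity, ε₀, hε₀, ?_⟩
  intro ε hε x
  have hε0 : 0 < ε := hε.1
  have hε1 : ε ≤ 1 := hε.2.trans hε₀.2
  set D : ℝ := C₀ * (1 + ‖x‖) ^ q₁ * (C * ε ^ (p + (m + 1 + n))) * (B * ε⁻¹ ^ (m + 1)) with hD
  have hg : Integrable (fun y : EuclideanSpace ℝ (Fin n) =>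
      D * Real.exp (-(ε / 2) * ‖y‖ ^ 2)) := (gaussian_integrable n hε0).const_mul D
  have hpt : ∀ y : EuclideanSpace ℝ (Fin n),
      ‖K x y * φ ε y * (Real.exp (-ε * ‖y‖ ^ 2) : ℂ)‖ ≤ D * Real.exp (-(ε / 2) * ‖y‖ ^ 2) := by
    intro y
    have hnorm : ‖K x y * φ ε y * (Real.exp (-ε * ‖y‖ ^ 2) : ℂ)‖
        = ‖K x y‖ * ‖φ ε y‖ * Real.exp (-ε * ‖y‖ ^ 2) := by
      rw [norm_mul, norm_mul, Complex.norm_real, Real.norm_eq_abs,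
        abs_of_pos (Real.exp_pos _)]
    rw [hnorm]
    calc ‖K x y‖ * ‖φ ε y‖ * Real.exp (-ε * ‖y‖ ^ 2)
        ≤ (C₀ * (1 + ‖x‖) ^ q₁ * (1 + ‖y‖) ^ q₁)
            * (C * ε ^ (p + (m + 1 + n)) * (1 + ‖y‖) ^ q₂) * Real.exp (-ε * ‖y‖ ^ 2) := by
          gcongr
          · exact hKbound x y
          · exact hφb ε hε y
      _ = (C₀ * (1 + ‖x‖) ^ q₁ * (C * ε ^ (p + (m + 1 + n))))
            * ((1 + ‖y‖) ^ m * Real.exp (-ε * ‖y‖ ^ 2)) := by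
          rw [hm, pow_add]; ring
      _ ≤ (C₀ * (1 + ‖x‖) ^ q₁ * (C * ε ^ (p + (m + 1 + n))))
            * (B * ε⁻¹ ^ (m + 1) * Real.exp (-(ε / 2) * ‖y‖ ^ 2)) := by
          apply mul_le_mul_of_nonneg_left _ (by positivity)
          rw [hB]
          exact aux_poly_exp m hε0 hε1 (norm_nonneg y)
      _ = D * Real.exp (-(ε / 2) * ‖y‖ ^ 2) := by rw [hD]; ring
  calc ‖∫ y, K x y * φ ε y * (Real.exp (-ε * ‖y‖ ^ 2) : ℂ)‖
      ≤ ∫ y, D * Real.exp (-(ε / 2) * ‖y‖ ^ 2) :=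
        norm_integral_le_of_norm_le hg (Filter.Eventually.of_forall hpt)
    _ = D * ∫ y : EuclideanSpace ℝ (Fin n), Real.exp (-(ε / 2) * ‖y‖ ^ 2) :=
        integral_const_mul D _
    _ ≤ D * ((2 * Real.pi) ^ n * ε⁻¹ ^ n) := by
        apply mul_le_mul_of_nonneg_left (gaussian_int_bound n hε0 hε1) (by positivity)
    _ = (C₀ * C * B * (2 * Real.pi) ^ n) * (1 + ‖x‖) ^ q₁
          * (ε ^ (p + (m + 1 + n)) * (ε⁻¹ ^ (m + 1) * ε⁻¹ ^ n)) := by rw [hD]; ring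
    _ = (C₀ * C * B * (2 * Real.pi) ^ n) * ε ^ p * (1 + ‖x‖) ^ q₁ := by
        have hpow : ε ^ (p + (m + 1 + n)) * (ε⁻¹ ^ (m + 1) * ε⁻¹ ^ n) = ε ^ p := by
          rw [← pow_add, pow_add, mul_assoc, ← mul_pow, mul_inv_cancel₀ hε0.ne',
            one_pow, mul_one]
        rw [hpow]; ring
end

section
/- Let n ≥ 1, ε ∈ (0,1], and let K : ℝⁿ × ℝⁿ → ℂ be continuous with |K(x,y)| ≤ B (1+|x|)^q (1+|y|)^q for some B > 0, q ∈ ℕ and all x, y ∈ ℝⁿ. Define iterated kernels by K^{(1)} := K and K^{(k+1)}(x,y) := ∫_{ℝⁿ} K(x,z) K^{(k)}(z,y) e^{-ε|z|²} dz. Then there exists a constant D > 0, depending only on q and n, such that for every k ≥ 1 and all x, y ∈ ℝⁿ, |K^{(k)}(x,y)| ≤ B^k · (D ε^{-(2q+n)/2})^{k-1} · (1+|x|)^q (1+|y|)^q. -/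
open MeasureTheory

/-- The iterated kernels of a generalised integral operator with Gaussian regularisation:
`iterKernel ε K k` is the kernel `K^{(k+1)}` of the `(k+1)`-st power, i.e. `K^{(1)} = K`
and `K^{(k+1)}(x,y) = ∫ K(x,z) K^{(k)}(z,y) e^{-ε|z|²} dz`. -/
noncomputable def iterKernel {n : ℕ} (ε : ℝ)
    (K : EuclideanSpace ℝ (Fin n) → EuclideanSpace ℝ (Fin n) → ℂ) :
    ℕ → EuclideanSpace ℝ (Fin n) → EuclideanSpace ℝ (Fin n) → ℂ
  | 0 => K
  | (k + 1) => fun x y => ∫ z, K x z * iterKernel ε K k z y * (Real.exp (-ε * ‖z‖ ^ 2) : ℂ)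


lemma aux_pow_le_exp (m : ℕ) {x : ℝ} (hx : 0 ≤ x) :
    x ^ m ≤ m.factorial * Real.exp x := by
  have hfac : (0:ℝ) < m.factorial := by exact_mod_cast m.factorial_pos
  have h2 : x ^ m / m.factorial ≤ ∑ i ∈ Finset.range (m+1), x ^ i / i.factorial :=
    Finset.single_le_sum (f := fun i => x ^ i / (i.factorial : ℝ))
      (fun i _ => by positivity) (Finset.self_mem_range_succ m)
  have h3 : x ^ m / m.factorial ≤ Real.exp x :=
    h2.trans (Real.sum_le_exp_of_nonneg hx (m+1))
  have := (div_le_iff₀ hfac).1 h3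
  linarith [this]

lemma aux_bound (m : ℕ) {a t : ℝ} (ha : 0 < a) (ht : 0 ≤ t) :
    (1+t)^m * Real.exp (-(a*t^2)) ≤ (3/2)^m * m.factorial * a⁻¹^m * Real.exp a := by
  have h1 : (1+t) ≤ 3/2 * (1+t^2) := by nlinarith [sq_nonneg (1-t)]
  have h2 : (1+t)^m ≤ (3/2 * (1+t^2))^m := pow_le_pow_left₀ (by linarith) h1 m
  have h3 : (a*(1+t^2))^m ≤ m.factorial * Real.exp (a*(1+t^2)) :=
    aux_pow_le_exp m (by positivity)
  have h4 : (1+t^2)^m ≤ m.factorial * a⁻¹^m * Real.exp (a*(1+t^2)) := by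
    have ham : (0:ℝ) < a^m := by positivity
    rw [mul_pow] at h3
    calc (1+t^2)^m = a⁻¹^m * (a^m * (1+t^2)^m) := by
          rw [← mul_assoc, ← mul_pow, inv_mul_cancel₀ ha.ne', one_pow, one_mul]
      _ ≤ a⁻¹^m * (m.factorial * Real.exp (a*(1+t^2))) := by
          apply mul_le_mul_of_nonneg_left h3 (by positivity)
      _ = m.factorial * a⁻¹^m * Real.exp (a*(1+t^2)) := by ring
  have hexp : Real.exp (a*(1+t^2)) * Real.exp (-(a*t^2)) = Real.exp a := by
    rw [← Real.exp_add]; ring_nf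
  calc (1+t)^m * Real.exp (-(a*t^2))
      ≤ (3/2 * (1+t^2))^m * Real.exp (-(a*t^2)) :=
        mul_le_mul_of_nonneg_right h2 (Real.exp_pos _).le
    _ = (3/2)^m * (1+t^2)^m * Real.exp (-(a*t^2)) := by rw [mul_pow]
    _ ≤ (3/2)^m * (m.factorial * a⁻¹^m * Real.exp (a*(1+t^2))) * Real.exp (-(a*t^2)) := by
        apply mul_le_mul_of_nonneg_right _ (Real.exp_pos _).le
        exact mul_le_mul_of_nonneg_left h4 (by positivity)
    _ = (3/2)^m * m.factorial * a⁻¹^m * (Real.exp (a*(1+t^2)) * Real.exp (-(a*t^2))) := by ring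
    _ = (3/2)^m * m.factorial * a⁻¹^m * Real.exp a := by rw [hexp]

lemma exp_integrable (n : ℕ) {b : ℝ} (hb : 0 < b) :
    Integrable (fun v : EuclideanSpace ℝ (Fin n) => Real.exp (-(b*‖v‖^2))) := by
  have h := (GaussianFourier.integrable_cexp_neg_mul_sq_norm_add (b := (b:ℂ)) (by simpa using hb) 0
      (0 : EuclideanSpace ℝ (Fin n))).norm
  apply h.congr
  filter_upwards with v
  simp [Complex.norm_exp, neg_mul, ← Complex.ofReal_pow]

lemma key_integrable (n m : ℕ) {ε : ℝ} (hε : 0 < ε) :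
    Integrable (fun z : EuclideanSpace ℝ (Fin n) =>
      (1+‖z‖)^m * Real.exp (-(ε*‖z‖^2))) := by
  set C := (3/2:ℝ)^m * m.factorial * (ε/2)⁻¹^m * Real.exp (ε/2) with hC
  apply Integrable.mono' ((exp_integrable n (half_pos hε)).const_mul C)
  · exact (((continuous_const.add continuous_norm).pow m).mul
      (Real.continuous_exp.comp (continuous_const.mul (continuous_norm.pow 2)).neg)).aestronglyMeasurable
  · filter_upwards with z
    have hsplit : Real.exp (-(ε*‖z‖^2))
        = Real.exp (-(ε/2*‖z‖^2)) * Real.exp (-(ε/2*‖z‖^2)) := by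
      rw [← Real.exp_add]; ring_nf
    rw [Real.norm_eq_abs, abs_of_nonneg (by positivity), hsplit, ← mul_assoc]
    exact mul_le_mul_of_nonneg_right (aux_bound m (half_pos hε) (norm_nonneg z))
      (Real.exp_pos _).le

lemma key_bound (n m : ℕ) {ε : ℝ} (hε : 0 < ε) (hε1 : ε ≤ 1) :
    ∫ z : EuclideanSpace ℝ (Fin n), (1+‖z‖)^m * Real.exp (-(ε*‖z‖^2))
      ≤ ((∫ u : EuclideanSpace ℝ (Fin n), (1+‖u‖)^m * Real.exp (-(1*‖u‖^2))) + 1)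
        * ε ^ (-(((m:ℝ)+n)/2)) := by
  set E := EuclideanSpace ℝ (Fin n)
  set f : E → ℝ := fun z => (1+‖z‖)^m * Real.exp (-(ε*‖z‖^2)) with hf
  set I₁ : ℝ := ∫ u : E, (1+‖u‖)^m * Real.exp (-(1*‖u‖^2)) with hI₁
  have hI₁nn : 0 ≤ I₁ := integral_nonneg (fun u => by positivity)
  set c : ℝ := Real.sqrt ε with hc
  have hc0 : 0 < c := Real.sqrt_pos.2 hε
  have hc1 : c ≤ 1 := by
    rw [hc, show (1:ℝ) = Real.sqrt 1 by simp]
    exact Real.sqrt_le_sqrt hε1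
  have hcc : c^2 = ε := Real.sq_sqrt hε.le
  have hrank : Module.finrank ℝ E = n := finrank_euclideanSpace_fin
  have step1 : ∫ x : E, f (c⁻¹ • x) = c ^ n • ∫ z, f z := by
    rw [Measure.integral_comp_inv_smul_of_nonneg volume f hc0.le, hrank]
  have hnorm : ∀ x : E, ‖c⁻¹ • x‖ = c⁻¹ * ‖x‖ := fun x => by
    rw [norm_smul, Real.norm_eq_abs, abs_of_pos (by positivity)]
  have step2 : ∫ x : E, f (c⁻¹ • x) ≤ c⁻¹^m * I₁ := by
    rw [hI₁, ← integral_const_mul]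
    apply integral_mono_of_nonneg
    · filter_upwards with x; positivity
    · exact (key_integrable n m one_pos).const_mul _
    · filter_upwards with x
      rw [hf]
      simp only [hnorm x]
      have he : ε * (c⁻¹ ^ 2 * ‖x‖ ^ 2) = 1 * ‖x‖^2 := by
        field_simp
        rw [← hcc]
      rw [mul_pow, he, ← mul_assoc]
      apply mul_le_mul_of_nonneg_right _ (Real.exp_pos _).le
      have h1 : 1 + c⁻¹ * ‖x‖ ≤ c⁻¹ * (1 + ‖x‖) := by
        have : (1:ℝ) ≤ c⁻¹ := (one_le_inv₀ hc0).2 hc1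
        nlinarith [norm_nonneg x]
      calc (1 + c⁻¹ * ‖x‖)^m ≤ (c⁻¹ * (1 + ‖x‖))^m :=
            pow_le_pow_left₀ (by positivity) h1 m
        _ = c⁻¹^m * (1 + ‖x‖)^m := mul_pow _ _ _
  have hfi : ∫ z, f z = (c^n)⁻¹ * ∫ x : E, f (c⁻¹ • x) := by
    rw [step1, smul_eq_mul, ← mul_assoc, inv_mul_cancel₀ (by positivity), one_mul]
  have hpow : (c^n)⁻¹ * c⁻¹^m = ε ^ (-(((m:ℝ)+n)/2)) := by
    have h2 : ∀ j : ℕ, c ^ j = ε ^ ((j:ℝ)/2) := fun j => by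
      rw [hc, Real.sqrt_eq_rpow, ← Real.rpow_natCast (ε ^ ((1:ℝ)/2)) j,
        ← Real.rpow_mul hε.le]
      ring_nf
    rw [inv_pow, ← mul_inv, h2, h2, ← Real.rpow_add hε, ← Real.rpow_neg hε.le]
    ring_nf
  calc ∫ z, f z = (c^n)⁻¹ * ∫ x : E, f (c⁻¹ • x) := hfi
    _ ≤ (c^n)⁻¹ * (c⁻¹^m * I₁) := by
        apply mul_le_mul_of_nonneg_left step2 (by positivity)
    _ = ((c^n)⁻¹ * c⁻¹^m) * I₁ := by ring
    _ = ε ^ (-(((m:ℝ)+n)/2)) * I₁ := by rw [hpow]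
    _ ≤ ε ^ (-(((m:ℝ)+n)/2)) * (I₁ + 1) := by
        apply mul_le_mul_of_nonneg_left (by linarith) (Real.rpow_nonneg hε.le _)
    _ = (I₁ + 1) * ε ^ (-(((m:ℝ)+n)/2)) := by ring

/-- For a continuous kernel with `|K(x,y)| ≤ B(1+|x|)^q(1+|y|)^q`, there
is a constant `D > 0` depending only on `q` and `n` such that the iterated kernels satisfy
`|K^{(k)}(x,y)| ≤ B^k (D ε^{-(2q+n)/2})^{k-1} (1+|x|)^q (1+|y|)^q` for every `k ≥ 1`
(here `iterKernel ε K k = K^{(k+1)}`). -/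
theorem iterated_kernel_bound
    (n q : ℕ) (hn : 1 ≤ n) :
    ∃ D > 0, ∀ ε ∈ Set.Ioc (0 : ℝ) 1,
      ∀ K : EuclideanSpace ℝ (Fin n) → EuclideanSpace ℝ (Fin n) → ℂ, ∀ B > 0,
        Continuous
          (fun p : EuclideanSpace ℝ (Fin n) × EuclideanSpace ℝ (Fin n) => K p.1 p.2) →
        (∀ x y : EuclideanSpace ℝ (Fin n),
          ‖K x y‖ ≤ B * (1 + ‖x‖) ^ q * (1 + ‖y‖) ^ q) →
        ∀ (k : ℕ) (x y : EuclideanSpace ℝ (Fin n)),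
          ‖iterKernel ε K k x y‖
            ≤ B ^ (k + 1) * (D * ε ^ (-((2 * (q : ℝ) + n) / 2))) ^ k *
                (1 + ‖x‖) ^ q * (1 + ‖y‖) ^ q := by
  classical
  set I₁ : ℝ := ∫ u : EuclideanSpace ℝ (Fin n),
      (1+‖u‖)^(2*q) * Real.exp (-(1*‖u‖^2)) with hI₁
  have hI₁nn : 0 ≤ I₁ := integral_nonneg (fun u => by positivity)
  refine ⟨I₁ + 1, by linarith, ?_⟩
  rintro ε ⟨hε, hε1⟩ K B hB _hKcont hK
  set Cε : ℝ := (I₁+1) * ε ^ (-((2*(q:ℝ)+n)/2)) with hCε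
  have hCε0 : 0 < Cε := mul_pos (by linarith) (Real.rpow_pos_of_pos hε _)
  have hIbound : ∫ z : EuclideanSpace ℝ (Fin n),
      (1+‖z‖)^(2*q) * Real.exp (-(ε*‖z‖^2)) ≤ Cε := by
    have h := key_bound n (2*q) hε hε1
    rw [hCε]
    have hexpeq : (-((((2*q:ℕ):ℝ)+n)/2)) = (-((2*(q:ℝ)+n)/2)) := by push_cast; ring
    rw [← hexpeq]
    exact h
  intro k
  induction k with
  | zero =>
    intro x y
    simpa [iterKernel] using hK x y
  | succ k ih =>
    intro x y
    have hkey := key_integrable n (2*q) hε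
    set M : ℝ := B^(k+2) * Cε^k * (1+‖x‖)^q * (1+‖y‖)^q with hM
    have hM0 : 0 ≤ M := by
      have := hCε0.le
      have := hB.le
      positivity
    have hbound : ‖∫ z, K x z * iterKernel ε K k z y * (Real.exp (-ε * ‖z‖^2) : ℂ)‖
        ≤ ∫ z : EuclideanSpace ℝ (Fin n),
            M * ((1+‖z‖)^(2*q) * Real.exp (-(ε*‖z‖^2))) := by
      apply norm_integral_le_of_norm_le (hkey.const_mul M)
      filter_upwards with z
      rw [norm_mul, norm_mul]
      have he : ‖((Real.exp (-ε * ‖z‖^2) : ℝ) : ℂ)‖ = Real.exp (-(ε*‖z‖^2)) := by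
        rw [Complex.norm_real, Real.norm_eq_abs, abs_of_pos (Real.exp_pos _), neg_mul]
      rw [he]
      calc ‖K x z‖ * ‖iterKernel ε K k z y‖ * Real.exp (-(ε*‖z‖^2))
          ≤ (B * (1+‖x‖)^q * (1+‖z‖)^q)
              * (B^(k+1) * Cε^k * (1+‖z‖)^q * (1+‖y‖)^q) * Real.exp (-(ε*‖z‖^2)) := by
            apply mul_le_mul_of_nonneg_right _ (Real.exp_pos _).le
            apply mul_le_mul (hK x z) (ih z y) (norm_nonneg _) (by positivity)
        _ = M * ((1+‖z‖)^(2*q) * Real.exp (-(ε*‖z‖^2))) := by rw [hM]; ring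
    have hint : ∫ z : EuclideanSpace ℝ (Fin n),
        M * ((1+‖z‖)^(2*q) * Real.exp (-(ε*‖z‖^2)))
        = M * ∫ z : EuclideanSpace ℝ (Fin n),
            (1+‖z‖)^(2*q) * Real.exp (-(ε*‖z‖^2)) := integral_const_mul M _
    have h2 : M * (∫ z : EuclideanSpace ℝ (Fin n),
        (1+‖z‖)^(2*q) * Real.exp (-(ε*‖z‖^2))) ≤ M * Cε :=
      mul_le_mul_of_nonneg_left hIbound hM0
    have h3 : M * Cε = B^(k+1+1) * Cε^(k+1) * (1+‖x‖)^q * (1+‖y‖)^q := by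
      rw [hM]; ring
    show ‖∫ z, K x z * iterKernel ε K k z y * (Real.exp (-ε * ‖z‖^2) : ℂ)‖
        ≤ B^(k+1+1) * Cε^(k+1) * (1+‖x‖)^q * (1+‖y‖)^q
    rw [← h3]
    exact hbound.trans (hint.le.trans h2)
end
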